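/- Let F ∈ Hol(Δ,Δ) ∩ C_A^3(1) with F(1) = 1 and 0 < α = F'(1) ≤ 1. The following are equivalent: (i) F(D(1,k)) ⊆ D(1, kα/(1+k(1−α))) for every k > 0, and F''(1) = F'''(1) = 0; (ii) F is the affine mapping F(z) = αz + 1 − α. -/

import Mathlib

open Complex Filter Set Metric ComplexConjugate

noncomputable section

/-- The open unit disk in ℂ. -/
def unitDisk : Set ℂ := {z : ℂ | ‖z‖ < 1}

/-- Stolz angle (nontangential approach region) with vertex `ζ` and aperture `k`. -/
def stolzAngle (ζ : ℂ) (k : ℝ) : Set ℂ :=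
  {z : ℂ | z ∈ unitDisk ∧ ‖z - ζ‖ < k * (1 - ‖z‖)}

/-- Angular (nontangential) limit of `g` at the boundary point `ζ` equals `L`:
the limit of `g` within every Stolz angle with vertex `ζ`. -/
def AngularLimAt (g : ℂ → ℂ) (ζ L : ℂ) : Prop :=
  ∀ k : ℝ, 1 < k → Filter.Tendsto g (nhdsWithin ζ (stolzAngle ζ k)) (nhds L)

/-- `g` belongs to `C_A^3(1)` with angular boundary values `a0 = g(1)`, `a1 = g'(1)`,
`a2 = g''(1)`, `a3 = g'''(1)`: the remainder of the third order Taylor expansion at `1`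
is `o((z-1)^3)` angularly. -/
def CA3At1 (g : ℂ → ℂ) (a0 a1 a2 a3 : ℂ) : Prop :=
  AngularLimAt (fun z =>
    (g z - (a0 + a1 * (z - 1) + a2 / 2 * (z - 1) ^ 2 + a3 / 6 * (z - 1) ^ 3)) / (z - 1) ^ 3) 1 0

/-- Holomorphic self-mapping of the unit disk. -/
def HolSelfMap (F : ℂ → ℂ) : Prop :=
  DifferentiableOn ℂ F unitDisk ∧ Set.MapsTo F unitDisk unitDisk

/-- `F` is a linear fractional transformation on the unit disk. -/
def IsLFTOn (F : ℂ → ℂ) : Prop :=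
  ∃ a b c d : ℂ, a * d - b * c ≠ 0 ∧ ∀ z ∈ unitDisk, F z = (a * z + b) / (c * z + d)

/-- `F` is a (holomorphic) automorphism of the unit disk. -/
def IsAutomorphismOfDisk (F : ℂ → ℂ) : Prop :=
  HolSelfMap F ∧ ∃ G : ℂ → ℂ, HolSelfMap G ∧
    (∀ z ∈ unitDisk, G (F z) = z) ∧ (∀ z ∈ unitDisk, F (G z) = z)

/-- The horocycle `D(1,k)` internally tangent to the unit circle at 1. -/
def horocycle (k : ℝ) : Set ℂ :=
  {z : ℂ | z ∈ unitDisk ∧ ‖1 - z‖ ^ 2 / (1 - ‖z‖ ^ 2) < k}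

/-- `τ` is the Denjoy–Wolff point of `F`: the iterates converge pointwise to `τ`. -/
def IsDenjoyWolffPt (F : ℂ → ℂ) (τ : ℂ) : Prop :=
  ∀ z ∈ unitDisk, Filter.Tendsto (fun n : ℕ => F^[n] z) Filter.atTop (nhds τ)

/-- A one-parameter continuous semigroup of holomorphic self-mappings of the disk. -/
def IsSemigroupOnDisk (S : ℝ → ℂ → ℂ) : Prop :=
  (∀ t : ℝ, 0 ≤ t → HolSelfMap (S t)) ∧
  (∀ t : ℝ, 0 ≤ t → ∀ s : ℝ, 0 ≤ s → ∀ z ∈ unitDisk, S (t + s) z = S t (S s z)) ∧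
  (∀ z ∈ unitDisk, Filter.Tendsto (fun t : ℝ => S t z) (nhdsWithin 0 (Set.Ioi 0)) (nhds z))

/-- `f` is the infinitesimal generator of the semigroup `S`. -/
def Generates (f : ℂ → ℂ) (S : ℝ → ℂ → ℂ) : Prop :=
  IsSemigroupOnDisk S ∧
  ∀ z ∈ unitDisk,
    Filter.Tendsto (fun t : ℝ => (z - S t z) / (t : ℂ)) (nhdsWithin 0 (Set.Ioi 0)) (nhds (f z))

/-- `f` belongs to the class `G(Δ)` of infinitesimal generators on the disk. -/
def IsGenerator (f : ℂ → ℂ) : Prop :=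
  DifferentiableOn ℂ f unitDisk ∧ ∃ S : ℝ → ℂ → ℂ, Generates f S

/-- `f` generates a one-parameter group of automorphisms of the disk
(equivalently, both `f` and `-f` are generators). -/
def GeneratesGroupOfAutomorphisms (f : ℂ → ℂ) : Prop :=
  IsGenerator f ∧ IsGenerator (fun z => -f z)

/-- Hyperbolic automorphism of the disk: an automorphism with boundary Denjoy–Wolff point `τ`
and angular derivative `0 < F'(τ) < 1`. -/
def IsHyperbolicAut (F : ℂ → ℂ) : Prop :=
  IsAutomorphismOfDisk F ∧ ∃ τ : ℂ, ‖τ‖ = 1 ∧ IsDenjoyWolffPt F τ ∧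
    ∃ α : ℝ, 0 < α ∧ α < 1 ∧ AngularLimAt (fun z => (F z - τ) / (z - τ)) τ (α : ℂ)

/-- Parabolic automorphism of the disk: an automorphism with boundary Denjoy–Wolff point `τ`
and angular derivative `F'(τ) = 1`. -/
def IsParabolicAut (F : ℂ → ℂ) : Prop :=
  IsAutomorphismOfDisk F ∧ ∃ τ : ℂ, ‖τ‖ = 1 ∧ IsDenjoyWolffPt F τ ∧
    AngularLimAt (fun z => (F z - τ) / (z - τ)) τ 1

/-!
Conjugate by the Cayley transform `C w = (1 + w) / (1 - w)`, which carries the disk onto the right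
half-plane and the horocycle `D(1,k)` onto the half-plane `Re ζ > 1/k`. In these coordinates the
affine map `A u = α u + 1 - α` becomes `ζ ↦ (ζ + 1 - α) / α`, so `A` maps `D(1,k)` exactly onto
`D(1, kα/(1 + k(1 - α)))`. This gives (ii) ⇒ (i), and shows that under (i) the map `G = A⁻¹ ∘ F`
sends every horocycle at `1` into itself, i.e. `q = C ∘ G - C` has nonnegative real part.
Since `F''(1) = F'''(1) = 0`, `G z = z + o((z - 1)^3)` and hence `q r = o(1 - r)` as `r → 1⁻`.
Harnack's inequality `Re q(0) (1 - r) ≤ Re q(r) (1 + r)` then forces `Re q(0) = 0`, after which the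
same inequality makes `q` constant, and the constant is `0`. So `G = id` and `F = A`.
-/

open Topology

def cayley (w : ℂ) : ℂ := (1 + w) / (1 - w)

lemma ne_one_of_mem_unitDisk {z : ℂ} (hz : z ∈ unitDisk) : z ≠ 1 := by
  rintro rfl
  simp [unitDisk] at hz

lemma re_cayley (w : ℂ) : (cayley w).re = (1 - normSq w) / normSq (1 - w) := by
  rw [cayley, div_re, ← add_div]
  congr 1
  simp only [normSq_apply, add_re, sub_re, add_im, sub_im, one_re, one_im]
  ring

lemma re_cayley_pos_iff {w : ℂ} : 0 < (cayley w).re ↔ w ∈ unitDisk := by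
  rcases eq_or_ne w 1 with rfl | hw
  · simp [cayley, unitDisk]
  have hns : 0 < normSq (1 - w) := normSq_pos.2 (sub_ne_zero.2 hw.symm)
  rw [re_cayley, div_pos_iff_of_pos_right hns, sub_pos, ← Complex.sq_norm,
    sq_lt_one_iff₀ (norm_nonneg w)]
  rfl

lemma cayley_injOn : InjOn cayley {1}ᶜ := by
  intro w (hw : w ≠ 1) w' (hw' : w' ≠ 1) h
  have h1 : 1 - w ≠ 0 := sub_ne_zero.2 hw.symm
  have h2 : 1 - w' ≠ 0 := sub_ne_zero.2 hw'.symm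
  rw [cayley, cayley, div_eq_div_iff h1 h2] at h
  linear_combination h / 2

lemma cayley_affine {α : ℂ} (hα : α ≠ 0) {u : ℂ} (hu : u ≠ 1) :
    cayley (α * u + 1 - α) = (cayley u + 1 - α) / α := by
  have h1 : 1 - u ≠ 0 := sub_ne_zero.2 hu.symm
  rw [cayley, cayley, show 1 - (α * u + 1 - α) = α * (1 - u) by ring]
  field_simp
  ring

lemma mem_horocycle_iff_re_cayley {k : ℝ} (hk : 0 < k) {z : ℂ} :
    z ∈ horocycle k ↔ k⁻¹ < (cayley z).re := by
  rcases eq_or_ne z 1 with rfl | hz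
  · simp [horocycle, unitDisk, cayley, hk.le]
  have hns : 0 < normSq (1 - z) := normSq_pos.2 (sub_ne_zero.2 hz.symm)
  rw [re_cayley, lt_div_iff₀ hns, inv_mul_lt_iff₀ hk]
  show z ∈ unitDisk ∧ ‖1 - z‖ ^ 2 / (1 - ‖z‖ ^ 2) < k ↔ _
  rw [Complex.sq_norm, Complex.sq_norm]
  constructor
  · rintro ⟨hzD, hlt⟩
    have hpos : 0 < 1 - normSq z := by
      have := re_cayley_pos_iff.2 hzD
      rw [re_cayley] at this
      exact (div_pos_iff_of_pos_right hns).1 this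
    rw [div_lt_iff₀ hpos] at hlt
    linarith
  · intro hlt
    have hpos : 0 < 1 - normSq z := pos_of_mul_pos_right (hns.trans hlt) hk.le
    refine ⟨re_cayley_pos_iff.1 ?_, (div_lt_iff₀ hpos).2 (by linarith)⟩
    rw [re_cayley]
    positivity

lemma affine_mem_horocycle_iff {α : ℝ} (hα : 0 < α) (hα1 : α ≤ 1) {k : ℝ} (hk : 0 < k)
    (u : ℂ) :
    (α : ℂ) * u + 1 - α ∈ horocycle (k * α / (1 + k * (1 - α))) ↔ u ∈ horocycle k := by
  rcases eq_or_ne u 1 with rfl | hu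
  · simp [horocycle, unitDisk]
  have hden : 0 < 1 + k * (1 - α) := by nlinarith
  rw [mem_horocycle_iff_re_cayley (by positivity), mem_horocycle_iff_re_cayley hk,
    cayley_affine (ofReal_ne_zero.2 hα.ne') hu, inv_div,
    show (1 + k * (1 - α)) / (k * α) = (k⁻¹ + 1 - α) / α by field_simp; ring]
  simp only [div_ofReal_re, add_re, sub_re, one_re, ofReal_re, div_lt_div_iff_of_pos_right hα,
    add_sub_assoc, add_lt_add_iff_right]

lemma re_cayley_le_of_mapsTo_horocycle {G : ℂ → ℂ}
    (hG : ∀ k : ℝ, 0 < k → MapsTo G (horocycle k) (horocycle k)) {w : ℂ} (hw : w ∈ unitDisk) :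
    (cayley w).re ≤ (cayley (G w)).re := by
  have hmem : ∀ t : ℝ, 0 < t → t < (cayley w).re → t < (cayley (G w)).re := fun t ht htw => by
    have hk : 0 < t⁻¹ := inv_pos.2 ht
    have := hG _ hk ((mem_horocycle_iff_re_cayley hk).2 (by rwa [inv_inv]))
    rwa [mem_horocycle_iff_re_cayley hk, inv_inv] at this
  by_contra! hlt
  have hpos := re_cayley_pos_iff.2 hw
  have := hmem (((cayley w).re + max (cayley (G w)).re 0) / 2) (by positivity)
    (by linarith [max_lt hlt hpos])
  linarith [le_max_left (cayley (G w)).re 0]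

lemma mapsTo_unitDisk_of_mapsTo_horocycle {G : ℂ → ℂ}
    (hG : ∀ k : ℝ, 0 < k → MapsTo G (horocycle k) (horocycle k)) :
    MapsTo G unitDisk unitDisk := fun _ hw =>
  re_cayley_pos_iff.1 ((re_cayley_pos_iff.2 hw).trans_le (re_cayley_le_of_mapsTo_horocycle hG hw))

lemma DifferentiableOn.cayley_comp {G : ℂ → ℂ} {s : Set ℂ} (hG : DifferentiableOn ℂ G s)
    (hne : ∀ w ∈ s, G w ≠ 1) : DifferentiableOn ℂ (fun w => cayley (G w)) s :=
  ((differentiableOn_const 1).add hG).div ((differentiableOn_const 1).sub hG)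
    fun w hw => sub_ne_zero.2 (hne w hw).symm

lemma norm_sub_le_norm_add_conj {v w : ℂ} (hv : 0 ≤ v.re) (hw : 0 ≤ w.re) :
    ‖v - w‖ ≤ ‖v + conj w‖ := by
  rw [← sq_le_sq₀ (norm_nonneg _) (norm_nonneg _), Complex.sq_norm, Complex.sq_norm,
    normSq_apply, normSq_apply]
  simp only [sub_re, sub_im, add_re, add_im, conj_re, conj_im]
  nlinarith [mul_nonneg hv hw]

lemma unitDisk_eq_ball : unitDisk = ball (0 : ℂ) 1 := by
  ext z
  simp [unitDisk]

/-- Schwarz's lemma applied to the Cayley transform `(q - q 0) / (q + conj (q 0))`. -/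
lemma norm_sub_le_mul_norm_add_conj_of_re_pos {q : ℂ → ℂ} (hq : DifferentiableOn ℂ q unitDisk)
    (hre : ∀ w ∈ unitDisk, 0 ≤ (q w).re) (h0 : 0 < (q 0).re) {w : ℂ} (hw : w ∈ unitDisk) :
    ‖q w - q 0‖ ≤ ‖w‖ * ‖q w + conj (q 0)‖ := by
  have hden : ∀ u ∈ unitDisk, q u + conj (q 0) ≠ 0 := fun u hu h => by
    have := congrArg re h
    simp only [add_re, conj_re, zero_re] at this
    linarith [hre u hu]
  have hdiff : DifferentiableOn ℂ (fun u => (q u - q 0) / (q u + conj (q 0))) (ball 0 1) := by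
    rw [← unitDisk_eq_ball]
    exact (hq.sub_const _).div (hq.add_const _) hden
  have hmaps : MapsTo (fun u => (q u - q 0) / (q u + conj (q 0))) (ball 0 1) (closedBall 0 1) := by
    intro u hu
    rw [← unitDisk_eq_ball] at hu
    rw [mem_closedBall_zero_iff, norm_div, div_le_one (norm_pos_iff.2 (hden u hu))]
    exact norm_sub_le_norm_add_conj (hre u hu) h0.le
  have hschwarz := Complex.norm_le_norm_of_mapsTo_ball hdiff hmaps (by simp) (show ‖w‖ < 1 from hw)
  rwa [norm_div, div_le_iff₀ (norm_pos_iff.2 (hden w hw))] at hschwarz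

lemma norm_sub_le_mul_norm_add_conj {q : ℂ → ℂ} (hq : DifferentiableOn ℂ q unitDisk)
    (hre : ∀ w ∈ unitDisk, 0 ≤ (q w).re) {w : ℂ} (hw : w ∈ unitDisk) :
    ‖q w - q 0‖ ≤ ‖w‖ * ‖q w + conj (q 0)‖ := by
  have hε : ∀ ε : ℝ, 0 < ε → ‖q w - q 0‖ ≤ ‖w‖ * ‖q w + conj (q 0) + 2 * ε‖ := fun ε hε => by
    have := norm_sub_le_mul_norm_add_conj_of_re_pos (q := fun u => q u + ε) (hq.add_const _)
      (fun u hu => by simpa using (hre u hu).trans (le_add_of_nonneg_right hε.le))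
      (by simpa using (hre 0 (by simp [unitDisk])).trans_lt (lt_add_of_pos_right _ hε)) hw
    simp only [add_sub_add_right_eq_sub, map_add, conj_ofReal] at this
    convert this using 3
    ring
  have hlim : Tendsto (fun ε : ℝ => ‖w‖ * ‖q w + conj (q 0) + 2 * ε‖) (𝓝[>] 0)
      (𝓝 (‖w‖ * ‖q w + conj (q 0)‖)) := by
    have : Continuous (fun ε : ℝ => ‖w‖ * ‖q w + conj (q 0) + 2 * ε‖) := by fun_prop
    simpa using (this.tendsto 0).mono_left nhdsWithin_le_nhds
  exact ge_of_tendsto hlim (eventually_nhdsWithin_of_forall hε)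

lemma re_mul_one_sub_norm_le {q : ℂ → ℂ} (hq : DifferentiableOn ℂ q unitDisk)
    (hre : ∀ w ∈ unitDisk, 0 ≤ (q w).re) {w : ℂ} (hw : w ∈ unitDisk) :
    (q 0).re * (1 - ‖w‖) ≤ (q w).re * (1 + ‖w‖) := by
  have h := norm_sub_le_mul_norm_add_conj hq hre hw
  have hw1 : ‖w‖ < 1 := hw
  have hv := hre w hw
  have hu := hre 0 (by simp [unitDisk])
  rw [← sq_le_sq₀ (norm_nonneg _) (by positivity), mul_pow, Complex.sq_norm (q w - q 0),
    Complex.sq_norm (q w + conj (q 0)), normSq_apply, normSq_apply] at h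
  simp only [sub_re, sub_im, add_re, add_im, conj_re, conj_im] at h
  nlinarith [norm_nonneg w, mul_nonneg (norm_nonneg w) (add_nonneg hu hv),
    mul_nonneg (mul_nonneg (sub_nonneg.2 hw1.le) (by positivity : (0 : ℝ) ≤ 1 + ‖w‖))
      (sq_nonneg ((q w).im - (q 0).im))]

lemma mem_unitDisk_ofReal {r : ℝ} (hr : r ∈ Ioo (-1) 1) : (r : ℂ) ∈ unitDisk := by
  show ‖(r : ℂ)‖ < 1
  rw [norm_real, Real.norm_eq_abs, abs_lt]
  exact hr

lemma norm_one_sub_ofReal {r : ℝ} (hr : r ≤ 1) : ‖1 - (r : ℂ)‖ = 1 - r := by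
  rw [← ofReal_one, ← ofReal_sub, norm_real, Real.norm_eq_abs, abs_of_nonneg (sub_nonneg.2 hr)]

theorem eqOn_zero_of_re_nonneg_of_tendsto {q : ℂ → ℂ} (hq : DifferentiableOn ℂ q unitDisk)
    (hre : ∀ w ∈ unitDisk, 0 ≤ (q w).re)
    (hlim : Tendsto (fun r : ℝ => q r / (1 - r)) (𝓝[<] 1) (𝓝 0)) :
    EqOn q 0 unitDisk := by
  have h0 : (0 : ℂ) ∈ unitDisk := by simp [unitDisk]
  have hr : ∀ᶠ r : ℝ in 𝓝[<] 1, r ∈ Ioo 0 1 := Ioo_mem_nhdsLT one_pos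
  have hnorm : Tendsto (fun r : ℝ => 2 * ‖q r / (1 - r)‖) (𝓝[<] 1) (𝓝 0) := by
    simpa using (hlim.norm.const_mul 2)
  have hre0 : (q 0).re = 0 := by
    refine le_antisymm (ge_of_tendsto hnorm ?_) (hre 0 h0)
    filter_upwards [hr] with r ⟨hr0, hr1⟩
    have hrD := mem_unitDisk_ofReal ⟨by linarith, hr1⟩
    have hharnack := re_mul_one_sub_norm_le hq hre hrD
    rw [norm_real, Real.norm_eq_abs, abs_of_pos hr0] at hharnack
    rw [norm_div, norm_one_sub_ofReal hr1.le, mul_div_assoc', le_div_iff₀ (sub_pos.2 hr1)]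
    nlinarith [re_le_norm (q r), hre _ hrD]
  have hconst : ∀ w ∈ unitDisk, q w = q 0 := fun w hw => by
    have h := norm_sub_le_mul_norm_add_conj hq hre hw
    rw [show q w + conj (q 0) = q w - q 0 by
      rw [← re_add_im (q 0), hre0]; simp; ring] at h
    have hw1 : ‖w‖ < 1 := hw
    exact sub_eq_zero.1 (norm_le_zero_iff.1 (by nlinarith [norm_nonneg (q w - q 0)]))
  suffices q 0 = 0 from fun w hw => (hconst w hw).trans this
  refine norm_le_zero_iff.1 (ge_of_tendsto (by simpa only [norm_zero] using hlim.norm) ?_)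
  filter_upwards [hr] with r ⟨hr0, hr1⟩
  rw [hconst _ (mem_unitDisk_ofReal ⟨by linarith, hr1⟩), norm_div, norm_one_sub_ofReal hr1.le,
    le_div_iff₀ (sub_pos.2 hr1)]
  nlinarith [norm_nonneg (q 0)]

lemma tendsto_ofReal_nhdsLT_stolzAngle {k : ℝ} (hk : 1 < k) :
    Tendsto (fun r : ℝ => (r : ℂ)) (𝓝[<] 1) (𝓝[stolzAngle 1 k] 1) := by
  refine tendsto_nhdsWithin_iff.2 ⟨?_, ?_⟩
  · simpa using (continuous_ofReal.tendsto 1).mono_left nhdsWithin_le_nhds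
  · filter_upwards [Ioo_mem_nhdsLT one_pos] with r ⟨hr0, hr1⟩
    refine ⟨mem_unitDisk_ofReal ⟨by linarith, hr1⟩, ?_⟩
    rw [norm_sub_rev, norm_one_sub_ofReal hr1.le, norm_real, Real.norm_eq_abs, abs_of_pos hr0]
    nlinarith

lemma AngularLimAt.tendsto_nhdsLT_one {g : ℂ → ℂ} {L : ℂ} (h : AngularLimAt g 1 L) :
    Tendsto (fun r : ℝ => g r) (𝓝[<] 1) (𝓝 L) :=
  (h 2 one_lt_two).comp (tendsto_ofReal_nhdsLT_stolzAngle one_lt_two)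

lemma tendsto_cayley_sub_cayley_div {G : ℂ → ℂ} {l : Filter ℂ} (hl : l ≤ 𝓝 1)
    (hne : ∀ᶠ z in l, z ≠ 1 ∧ G z ≠ 1)
    (hG : Tendsto (fun z => (G z - z) / (z - 1) ^ 3) l (𝓝 0)) :
    Tendsto (fun z => (cayley (G z) - cayley z) / (1 - z)) l (𝓝 0) := by
  set E := fun z => (G z - z) / (z - 1) ^ 3
  have hsub : Tendsto (fun z : ℂ => z - 1) l (𝓝 0) := by
    simpa using (tendsto_id.mono_left hl).sub_const (1 : ℂ)
  have hden : Tendsto (fun z => -1 - E z * (z - 1) ^ 2) l (𝓝 (-1)) := by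
    simpa using tendsto_const_nhds.sub (hG.mul (hsub.pow 2))
  have hlim : Tendsto (fun z => 2 * E z / (-1 - E z * (z - 1) ^ 2)) l (𝓝 0) := by
    have := (hG.const_mul 2).div hden (by norm_num)
    rwa [mul_zero, zero_div] at this
  refine hlim.congr' ?_
  filter_upwards [hne] with z ⟨hz, hGz⟩
  have h1 : z - 1 ≠ 0 := sub_ne_zero.2 hz
  have h2 : 1 - z ≠ 0 := sub_ne_zero.2 hz.symm
  have h3 : 1 - G z ≠ 0 := sub_ne_zero.2 hGz.symm
  have hden_eq : -1 - E z * (z - 1) ^ 2 = (1 - G z) / (z - 1) := by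
    simp only [E]
    field_simp
    ring
  rw [hden_eq, cayley, cayley]
  simp only [E]
  field_simp
  ring

lemma eq_zero_of_tendsto_div_sub_one_add {b c : ℂ}
    (h : Tendsto (fun r : ℝ => b / ((r : ℂ) - 1) + c) (𝓝[<] 1) (𝓝 0)) : b = 0 ∧ c = 0 := by
  have hsub : Tendsto (fun r : ℝ => (r : ℂ) - 1) (𝓝[<] 1) (𝓝 0) := by
    simpa using ((continuous_ofReal.tendsto 1).mono_left nhdsWithin_le_nhds).sub_const (1 : ℂ)
  have hb : Tendsto (fun r : ℝ => b + c * ((r : ℂ) - 1)) (𝓝[<] 1) (𝓝 0) := by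
    have hmul : Tendsto (fun r : ℝ => (b / ((r : ℂ) - 1) + c) * ((r : ℂ) - 1)) (𝓝[<] 1)
        (𝓝 0) := by
      simpa using h.mul hsub
    refine hmul.congr' ?_
    filter_upwards [self_mem_nhdsWithin] with r (hr : r < 1)
    have : (r : ℂ) - 1 ≠ 0 := sub_ne_zero.2 (by exact_mod_cast hr.ne)
    field_simp
  obtain rfl : b = 0 :=
    tendsto_nhds_unique (by simpa using tendsto_const_nhds.add (hsub.const_mul c)) hb
  simpa using h

theorem eqOn_id_of_mapsTo_horocycle {G : ℂ → ℂ} (hG : DifferentiableOn ℂ G unitDisk)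
    (hGk : ∀ k : ℝ, 0 < k → MapsTo G (horocycle k) (horocycle k))
    (hE : AngularLimAt (fun z => (G z - z) / (z - 1) ^ 3) 1 0) : EqOn G id unitDisk := by
  have hGD := mapsTo_unitDisk_of_mapsTo_horocycle hGk
  have hq := eqOn_zero_of_re_nonneg_of_tendsto (q := fun w => cayley (G w) - cayley w)
    ((hG.cayley_comp fun _ hw => ne_one_of_mem_unitDisk (hGD hw)).sub
      (differentiableOn_id.cayley_comp fun _ hw => ne_one_of_mem_unitDisk hw))
    (fun w hw => sub_nonneg.2 (re_cayley_le_of_mapsTo_horocycle hGk hw))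
    ((tendsto_cayley_sub_cayley_div nhdsWithin_le_nhds (eventually_nhdsWithin_of_forall
      fun z hz => ⟨ne_one_of_mem_unitDisk hz.1, ne_one_of_mem_unitDisk (hGD hz.1)⟩)
      (hE 2 one_lt_two)).comp (tendsto_ofReal_nhdsLT_stolzAngle one_lt_two))
  exact fun z hz => cayley_injOn (ne_one_of_mem_unitDisk (hGD hz)) (ne_one_of_mem_unitDisk hz)
    (sub_eq_zero.1 (hq hz))

lemma CA3At1.eq_zero_of_eqOn_affine {F : ℂ → ℂ} {α b c : ℂ} (hC : CA3At1 F 1 α b c)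
    (hAff : ∀ z ∈ unitDisk, F z = α * z + 1 - α) : b = 0 ∧ c = 0 := by
  have hcoeff := eq_zero_of_tendsto_div_sub_one_add (b := -(b / 2)) (c := -(c / 6))
    ((AngularLimAt.tendsto_nhdsLT_one hC).congr' ?_)
  · exact ⟨by simpa using hcoeff.1, by simpa using hcoeff.2⟩
  filter_upwards [Ioo_mem_nhdsLT one_pos] with r ⟨hr0, hr1⟩
  have : (r : ℂ) - 1 ≠ 0 := sub_ne_zero.2 (by exact_mod_cast hr1.ne)
  rw [hAff _ (mem_unitDisk_ofReal ⟨by linarith, hr1⟩)]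
  field_simp
  ring

theorem stmt5 (F : ℂ → ℂ) (hF : HolSelfMap F)
    (α : ℝ) (hα : 0 < α) (hα1 : α ≤ 1) (b c : ℂ)
    (hC : CA3At1 F 1 (α : ℂ) b c) :
    ((∀ k : ℝ, 0 < k →
        Set.MapsTo F (horocycle k) (horocycle (k * α / (1 + k * (1 - α))))) ∧
      b = 0 ∧ c = 0) ↔
    (∀ z ∈ unitDisk, F z = (α : ℂ) * z + 1 - (α : ℂ)) := by
  have hα0 : (α : ℂ) ≠ 0 := ofReal_ne_zero.2 hα.ne'
  constructor
  · rintro ⟨hMaps, rfl, rfl⟩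
    set G : ℂ → ℂ := fun w => (F w - (1 - α)) / α
    have hFG : ∀ w, F w = α * G w + 1 - α := fun w => by
      simp only [G]; field_simp; ring
    have hGk : ∀ k : ℝ, 0 < k → MapsTo G (horocycle k) (horocycle k) := fun k hk w hw =>
      (affine_mem_horocycle_iff hα hα1 hk (G w)).1 (hFG w ▸ hMaps k hk hw)
    have hE : AngularLimAt (fun z => (G z - z) / (z - 1) ^ 3) 1 0 := fun k hk => by
      have := (hC k hk).div_const (α : ℂ)
      simp only [zero_div, zero_mul, add_zero] at this
      refine this.congr fun z => ?_
      simp only [G]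
      field_simp
      ring
    have hGid := eqOn_id_of_mapsTo_horocycle ((hF.1.sub_const _).div_const _) hGk hE
    intro z hz
    rw [hFG, show G z = z from hGid hz]
  · intro hAff
    exact ⟨fun k hk z hz => hAff z hz.1 ▸ (affine_mem_horocycle_iff hα hα1 hk z).2 hz,
      hC.eq_zero_of_eqOn_affine hAff⟩
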